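/- arXiv:math/9502210 — 4 statements merged into one kernel-verified Lean document; each statement's English description precedes it below -/
import Mathlib

section
/- The Abel polynomials A_0(x;b) = 1 and A_n(x;b) = x(x-nb)^{n-1} for n ≥ 1 form a sequence of binomial type; in particular Abel's identity holds: (x+a)(x+a-nb)^{n-1} = Σ_{k=0}^{n} C(n,k) · a(a-kb)^{k-1} · x(x-(n-k)b)^{n-k-1} for all n ≥ 1, where the k=0 term is interpreted as x(x-nb)^{n-1} and the k=n term as a(a-nb)^{n-1}·1. -/
open Finset

section AbelAux

open Polynomial

variable {K : Type*} [Field K] [CharZero K]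

noncomputable def Bp (b : K) : ℕ → Polynomial K
  | 0 => 1
  | (m+1) => X * (X - C (((m+1 : ℕ) : K) * b)) ^ m

lemma Bp_eval_zero (b : K) (m : ℕ) : (Bp b m).eval 0 = if m = 0 then 1 else 0 := by
  cases m with
  | zero => simp [Bp]
  | succ k => simp [Bp]

lemma comp_shift_inj (b : K) {p : Polynomial K} (h : p.comp (X + C b) = 0) : p = 0 := by
  have h2 : (p.comp (X + C b)).comp (X - C b) = 0 := by rw [h]; simp
  rwa [comp_assoc, add_comp, X_comp, C_comp, sub_add_cancel, comp_X] at h2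

lemma dB (b : K) (m : ℕ) :
    (derivative (Bp b m)).comp (X + C b) = C ((m : ℕ) : K) * Bp b (m - 1) := by
  match m with
  | 0 => simp [Bp]
  | 1 => simp [Bp]
  | (k+2) =>
    show (derivative (X * (X - C (((k+2 : ℕ) : K) * b)) ^ (k+1))).comp (X + C b)
      = C (((k+2 : ℕ) : K)) * (X * (X - C (((k+1 : ℕ) : K) * b)) ^ k)
    rw [derivative_mul, derivative_X, derivative_pow, derivative_sub, derivative_X, derivative_C]
    push_cast
    simp only [add_comp, mul_comp, pow_comp, X_comp, C_comp, sub_comp, natCast_comp,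
      one_comp, ofNat_comp, one_mul, sub_zero, mul_one, C_add, C_mul, C_1, map_ofNat, Nat.cast_ofNat]
    ring

lemma abel_poly (b a : K) : ∀ n : ℕ, (Bp b n).comp (X + C a)
    = ∑ k ∈ range (n+1), C ((n.choose k : K) * (Bp b k).eval a) * Bp b (n - k) := by
  intro n
  induction n with
  | zero => simp [Bp]
  | succ n ih =>
    set S : Polynomial K :=
      ∑ k ∈ range (n+2), C (((n+1).choose k : K) * (Bp b k).eval a) * Bp b (n+1-k) with hS
    have hcomm : ∀ p : Polynomial K,
        (p.comp (X + C a)).comp (X + C b) = (p.comp (X + C b)).comp (X + C a) := by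
      intro p
      rw [comp_assoc, comp_assoc]
      congr 1
      simp only [add_comp, X_comp, C_comp]
      ring
    have h1 : (derivative ((Bp b (n+1)).comp (X + C a))).comp (X + C b)
        = C (((n+1 : ℕ)) : K) * ((Bp b n).comp (X + C a)) := by
      rw [derivative_comp]
      simp only [derivative_add, derivative_X, derivative_C, add_zero, one_mul]
      rw [hcomm, dB]
      simp [mul_comp]
    have h2 : (derivative S).comp (X + C b)
        = C (((n+1 : ℕ)) : K) *
          ∑ k ∈ range (n+1), C ((n.choose k : K) * (Bp b k).eval a) * Bp b (n - k) := by
      rw [hS, derivative_sum, Polynomial.sum_comp]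
      have hterm : ∀ k ∈ range (n+2),
          (derivative (C (((n+1).choose k : K) * (Bp b k).eval a) * Bp b (n+1-k))).comp (X + C b)
          = C (((n+1).choose k : K) * (Bp b k).eval a) * (C (((n+1-k : ℕ)) : K) * Bp b (n-k)) := by
        intro k _
        rw [derivative_mul, derivative_C, zero_mul, zero_add, mul_comp, C_comp, dB]
        have : n + 1 - k - 1 = n - k := by omega
        rw [this]
      rw [Finset.sum_congr rfl hterm, Finset.sum_range_succ]
      simp only [Nat.sub_self, Nat.cast_zero, map_zero, zero_mul, mul_zero, add_zero]
      rw [Finset.mul_sum]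
      refine Finset.sum_congr rfl fun k hk => ?_
      have hk' : k ≤ n := by simpa [Nat.lt_succ_iff] using hk
      have hchoose : ((n.choose k : K)) * ((n+1 : ℕ) : K)
          = (((n+1).choose k : K)) * (((n+1-k : ℕ)) : K) := by
        exact_mod_cast congrArg (Nat.cast : ℕ → K) (Nat.choose_mul_succ_eq n k)
      rw [C_mul, C_mul]
      have h3 : (C ((n.choose k : K)) * C (((n+1:ℕ)) : K) : Polynomial K)
          = C (((n+1).choose k : K)) * C (((n+1-k : ℕ)) : K) := by
        rw [← C_mul, ← C_mul, hchoose]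
      linear_combination (C ((Bp b k).eval a) * Bp b (n-k)) * h3.symm
    have hd : derivative ((Bp b (n+1)).comp (X + C a) - S) = 0 := by
      apply comp_shift_inj b
      rw [derivative_sub, sub_comp, h1, h2, ih, sub_self]
    have hG := eq_C_of_derivative_eq_zero hd
    have hev : ((Bp b (n+1)).comp (X + C a) - S).eval 0 = 0 := by
      rw [eval_sub, eval_comp]
      simp only [eval_add, eval_X, eval_C, zero_add]
      rw [hS]
      rw [eval_finset_sum]
      have : ∀ k ∈ range (n+2),
          (C (((n+1).choose k : K) * (Bp b k).eval a) * Bp b (n+1-k)).eval 0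
          = if k = n+1 then (Bp b (n+1)).eval a else 0 := by
        intro k hk
        rw [eval_mul, eval_C, Bp_eval_zero]
        rcases eq_or_ne k (n+1) with h | h
        · simp [h]
        · have : n + 1 - k ≠ 0 := by
            simp only [Finset.mem_range] at hk; omega
          simp [this, h]
      rw [Finset.sum_congr rfl this, Finset.sum_ite_eq']
      simp
    rw [hG, eval_C] at hev
    rw [hev, map_zero, sub_eq_zero] at hG
    exact hG


end AbelAux

open Polynomial in
/-- Abel's identity: the Abel polynomials `A 0 = 1`, `A n x = x*(x-n*b)^(n-1)` are of
binomial type. -/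
theorem abel_identity {K : Type*} [Field K] [CharZero K] (b : K)
    (A : ℕ → K → K)
    (hA0 : ∀ x, A 0 x = 1)
    (hA : ∀ n, 1 ≤ n → ∀ x, A n x = x * (x - (n : K) * b) ^ (n - 1)) :
    ∀ (n : ℕ), 1 ≤ n → ∀ x a : K,
      (x + a) * (x + a - (n : K) * b) ^ (n - 1) =
        ∑ k ∈ Finset.range (n + 1), (n.choose k : K) * A k a * A (n - k) x := by
  intro n hn x a
  have key := congrArg (eval x) (abel_poly b a n)
  rw [eval_comp] at key
  simp only [eval_add, eval_X, eval_C, eval_finset_sum] at key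
  have hAeq : ∀ k y, A k y = (Bp b k).eval y := by
    intro k y
    cases k with
    | zero => simp [Bp, hA0]
    | succ m => rw [hA (m+1) (by omega)]; simp [Bp]
  obtain ⟨m, rfl⟩ : ∃ m, n = m + 1 := ⟨n-1, by omega⟩
  have hL : (Bp b (m+1)).eval (x + a) = (x + a) * (x + a - ((m+1 : ℕ) : K) * b) ^ m := by
    simp [Bp]
  rw [hL] at key
  rw [show m + 1 - 1 = m from rfl, key]
  refine Finset.sum_congr rfl fun k hk => ?_
  rw [eval_mul, eval_C, hAeq, hAeq]
end

section
/- For all n ≥ 1 and all a, b, x in a commutative ring containing ℚ: (x+a)^n = Σ_{k=0}^{n} [a(a-kb)^{k-1}/k!] · (n)_k · (x+kb)^{n-k}, where (n)_k = n(n-1)···(n-k+1) is the falling factorial and, for k=0, the factor a(a-kb)^{k-1} is read as 1, so that the k=0 term equals x^n. -/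
open Finset Polynomial

private lemma alt_sum {R : Type*} [CommRing R] :
    ∀ m : ℕ, ∀ n : ℕ, n < m → ∀ c d : R,
      ∑ k ∈ Finset.range (m + 1), (-1 : R) ^ k * (m.choose k : R) * (c + (k : R) * d) ^ n = 0 := by
  intro m
  induction m with
  | zero => intro n hn; omega
  | succ m ih =>
    intro n hn c d
    set g : ℕ → R := fun k => (c + (k : R) * d) ^ n with hg
    have e1 : ∑ k ∈ Finset.range (m + 2), (-1 : R) ^ k * ((m+1).choose k : R) * g k
        = (∑ j ∈ Finset.range (m + 1), (-1 : R) ^ (j+1) * (((m.choose j : R)) + (m.choose (j+1) : R)) * g (j+1)) + g 0 := by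
      rw [Finset.sum_range_succ']
      simp only [Nat.choose_succ_succ', Nat.cast_add, pow_zero, Nat.choose_zero_right,
        Nat.cast_one, one_mul, mul_one, Nat.cast_ofNat, Nat.cast_zero]
    have e2 : ∑ k ∈ Finset.range (m + 1), (-1 : R) ^ k * (m.choose k : R) * g k
        = (∑ j ∈ Finset.range (m + 1), (-1 : R) ^ (j+1) * (m.choose (j+1) : R) * g (j+1)) + g 0 := by
      have h0 : ∑ k ∈ Finset.range (m + 2), (-1 : R) ^ k * (m.choose k : R) * g k
          = ∑ k ∈ Finset.range (m + 1), (-1 : R) ^ k * (m.choose k : R) * g k := by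
        rw [Finset.sum_range_succ]
        simp [Nat.choose_eq_zero_of_lt (Nat.lt_succ_self m)]
      rw [← h0, Finset.sum_range_succ']
      simp
    have hA : ∑ k ∈ Finset.range (m + 2), (-1 : R) ^ k * ((m+1).choose k : R) * g k
        = ∑ k ∈ Finset.range (m + 1), (-1 : R) ^ k * (m.choose k : R) * (g k - g (k + 1)) := by
      have mid : ∀ j : ℕ, (-1 : R)^(j+1) * ((m.choose j : R) + (m.choose (j+1) : R)) * g (j+1)
          = (-1:R)^(j+1) * (m.choose (j+1) : R) * g (j+1) - (-1:R)^j * (m.choose j : R) * g (j+1) := by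
        intro j; ring
      calc ∑ k ∈ Finset.range (m + 2), (-1 : R) ^ k * ((m+1).choose k : R) * g k
          = (∑ j ∈ Finset.range (m + 1), (-1 : R) ^ (j+1) * (((m.choose j : R)) + (m.choose (j+1) : R)) * g (j+1)) + g 0 := e1
        _ = ((∑ j ∈ Finset.range (m + 1), (-1 : R)^(j+1) * (m.choose (j+1) : R) * g (j+1)) + g 0)
              - ∑ j ∈ Finset.range (m + 1), (-1:R)^j * (m.choose j : R) * g (j+1) := by
            rw [Finset.sum_congr rfl (fun j _ => mid j), Finset.sum_sub_distrib]; ring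
        _ = (∑ k ∈ Finset.range (m + 1), (-1 : R) ^ k * (m.choose k : R) * g k)
              - ∑ j ∈ Finset.range (m + 1), (-1:R)^j * (m.choose j : R) * g (j+1) := by rw [← e2]
        _ = ∑ k ∈ Finset.range (m + 1), (-1 : R) ^ k * (m.choose k : R) * (g k - g (k + 1)) := by
            simp only [mul_sub]; rw [Finset.sum_sub_distrib]
    rw [hA]
    have hgdiff : ∀ k : ℕ, g k - g (k + 1)
        = -∑ j ∈ Finset.range n, (c + (k:R) * d) ^ j * d ^ (n - j) * (n.choose j : R) := by
      intro k
      have h1 : g (k+1) = ((c + (k:R)*d) + d) ^ n := by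
        simp only [hg]; push_cast; ring_nf
      rw [h1, add_pow, Finset.sum_range_succ, hg]
      simp
    calc ∑ k ∈ Finset.range (m + 1), (-1 : R) ^ k * (m.choose k : R) * (g k - g (k + 1))
        = -∑ j ∈ Finset.range n, (d ^ (n-j) * (n.choose j : R)) *
            ∑ k ∈ Finset.range (m + 1), (-1 : R) ^ k * (m.choose k : R) * (c + (k:R) * d) ^ j := by
          simp only [hgdiff, mul_neg, Finset.sum_neg_distrib, Finset.mul_sum]
          rw [Finset.sum_comm]
          congr 1
          apply Finset.sum_congr rfl
          intro j _
          apply Finset.sum_congr rfl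
          intro k _
          ring
      _ = 0 := by
          rw [← Finset.sum_neg_distrib]
          apply Finset.sum_eq_zero
          intro j hj
          rw [ih j (lt_of_lt_of_le (Finset.mem_range.mp hj) (Nat.lt_succ_iff.mp hn)) c d]
          simp

private lemma rat_nzsmul {R : Type*} [CommRing R] [Algebra ℚ R] : NoZeroSMulDivisors ℕ R := by
  refine ⟨fun {n r} h => ?_⟩
  rcases eq_or_ne n 0 with rfl | hn
  · exact Or.inl rfl
  · right
    have h1 : ((n : ℚ)) • r = 0 := by rwa [Nat.cast_smul_eq_nsmul]
    calc r = ((n:ℚ)⁻¹ * (n:ℚ)) • r := by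
            rw [inv_mul_cancel₀ (by exact_mod_cast hn : (n:ℚ) ≠ 0), one_smul]
      _ = (n:ℚ)⁻¹ • ((n:ℚ) • r) := by rw [mul_smul]
      _ = 0 := by rw [h1, smul_zero]


private lemma abel_poly_s3 {R : Type*} [CommRing R] [Algebra ℚ R] (a b : R) :
    ∀ n : ℕ, 1 ≤ n →
    (Polynomial.X + Polynomial.C a) ^ n =
      Polynomial.X ^ n + ∑ k ∈ Finset.Icc 1 n,
        Polynomial.C (a * (a - (k : R) * b) ^ (k - 1) *
            algebraMap ℚ R (1 / (k.factorial : ℚ)) * (n.descFactorial k : R)) *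
          (Polynomial.X + Polynomial.C ((k : R) * b)) ^ (n - k) := by
  haveI := rat_nzsmul (R := R)
  refine Nat.le_induction ?_ ?_
  · -- base n = 1
    rw [Finset.Icc_self, Finset.sum_singleton]; norm_num
  · -- step
    intro n hn IH
    set rhs : R[X] := Polynomial.X ^ (n+1) + ∑ k ∈ Finset.Icc 1 (n+1),
        Polynomial.C (a * (a - (k : R) * b) ^ (k - 1) *
            algebraMap ℚ R (1 / (k.factorial : ℚ)) * ((n+1).descFactorial k : R)) *
          (Polynomial.X + Polynomial.C ((k : R) * b)) ^ (n + 1 - k) with hrhs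
    have hdF : ∀ k : ℕ, ((n+1).descFactorial k) * (n + 1 - k) = (n+1) * n.descFactorial k := by
      intro k
      rw [mul_comm, ← Nat.descFactorial_succ, Nat.succ_descFactorial_succ]
    have dL : derivative ((X + C a) ^ (n+1)) = C ((n:R)+1) * (X + C a) ^ n := by
      rw [derivative_X_add_C_pow, Nat.add_sub_cancel]
      push_cast
      ring
    have dR : derivative rhs = C ((n:R)+1) * (X + C a) ^ n := by
      rw [hrhs, derivative_add, derivative_X_pow, Nat.add_sub_cancel, derivative_sum]
      have hterm : ∀ k ∈ Finset.Icc 1 (n+1),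
          derivative (Polynomial.C (a * (a - (k : R) * b) ^ (k - 1) *
            algebraMap ℚ R (1 / (k.factorial : ℚ)) * ((n+1).descFactorial k : R)) *
            (Polynomial.X + Polynomial.C ((k : R) * b)) ^ (n + 1 - k))
          = C ((n:R)+1) * (Polynomial.C (a * (a - (k : R) * b) ^ (k - 1) *
              algebraMap ℚ R (1 / (k.factorial : ℚ)) * (n.descFactorial k : R)) *
            (Polynomial.X + Polynomial.C ((k : R) * b)) ^ (n - k)) := by
        intro k hk
        rw [derivative_C_mul, derivative_X_add_C_pow]
        have he : n + 1 - k - 1 = n - k := by omega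
        rw [he]
        have hc := congrArg (Nat.cast : ℕ → R) (hdF k)
        push_cast at hc
        rw [← mul_assoc, ← mul_assoc, ← C_mul, ← C_mul]
        congr 2
        push_cast
        linear_combination (a * (a - (k : R) * b) ^ (k - 1) *
            algebraMap ℚ R (1 / (k.factorial : ℚ))) * hc
      rw [Finset.sum_congr rfl hterm, ← Finset.mul_sum, IH,
        Finset.sum_Icc_succ_top (Nat.le_add_left 1 n)]
      have hz : (n.descFactorial (n+1) : R) = 0 := by
        rw [Nat.descFactorial_eq_zero_iff_lt.mpr (Nat.lt_succ_self n)]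
        simp
      rw [hz]
      simp only [mul_zero, map_zero, zero_mul, add_zero]
      push_cast
      ring
    have key : derivative ((X + C a) ^ (n+1) - rhs) = 0 := by
      rw [derivative_sub, dL, dR, sub_self]
    have hconst : eval (-a) ((X + C a) ^ (n+1) - rhs) = 0 := by
      rw [hrhs]
      simp only [eval_sub, eval_pow, eval_add, eval_X, eval_C, eval_finset_sum, eval_mul]
      rw [neg_add_cancel, zero_pow (Nat.succ_ne_zero n), zero_sub, neg_eq_zero]
      set hfun : ℕ → R := fun k => (-1:R)^k * (((n+1).choose k : R)) * (a + (k:R)*(-b))^n with hhfun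
      have halt := alt_sum (n+1) n (Nat.lt_succ_self n) a (-b)
      have hIcc : ∀ k ∈ Finset.Icc 1 (n+1),
          (a * (a - (k : R) * b) ^ (k - 1) * algebraMap ℚ R (1 / (k.factorial : ℚ)) *
            ((n+1).descFactorial k : R)) * (-a + (k:R) * b) ^ (n + 1 - k)
          = ((-1:R)^(n+1) * a) * hfun k := by
        intro k hk
        obtain ⟨hk1, hk2⟩ := Finset.mem_Icc.mp hk
        have hfac : algebraMap ℚ R (1 / (k.factorial:ℚ)) * (((n+1).descFactorial k : R))
            = (((n+1).choose k : R)) := by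
          calc algebraMap ℚ R (1 / (k.factorial:ℚ)) * (((n+1).descFactorial k : R))
              = algebraMap ℚ R (1 / (k.factorial:ℚ)) *
                  algebraMap ℚ R (((n+1).descFactorial k : ℚ)) := by rw [map_natCast]
            _ = algebraMap ℚ R ((1 / (k.factorial:ℚ)) * ((n+1).descFactorial k : ℚ)) :=
                (map_mul _ _ _).symm
            _ = algebraMap ℚ R (((n+1).choose k : ℚ)) := by
                congr 1
                rw [Nat.descFactorial_eq_factorial_mul_choose]
                push_cast
                have : (k.factorial : ℚ) ≠ 0 := by exact_mod_cast k.factorial_ne_zero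
                field_simp
            _ = (((n+1).choose k : R)) := map_natCast _ _
        have hp : (a - (k:R)*b)^(k-1) * (-a + (k:R)*b)^(n+1-k)
            = (-1:R)^(n+1-k) * (a - (k:R)*b)^n := by
          rw [show (-a + (k:R)*b) = -(a - (k:R)*b) from by ring, neg_pow,
            mul_comm ((-1:R)^(n+1-k)) _, ← mul_assoc, ← pow_add,
            show (k-1) + (n+1-k) = n from by omega, mul_comm]
        have hsign : (-1:R)^(n+1-k) = (-1:R)^(n+1) * (-1:R)^k := by
          have h2 : (-1:R)^(n+1+k) = (-1:R)^(n+1-k) := by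
            rw [show n+1+k = (n+1-k) + 2*k from by omega, pow_add, pow_mul]
            norm_num
          rw [← h2, pow_add]
        have hab : (a + (k:R)*(-b))^n = (a - (k:R)*b)^n := by ring_nf
        rw [hhfun]
        beta_reduce
        rw [hab]
        calc (a * (a - (k : R) * b) ^ (k - 1) * algebraMap ℚ R (1 / (k.factorial : ℚ)) *
              ((n+1).descFactorial k : R)) * (-a + (k:R) * b) ^ (n + 1 - k)
            = (algebraMap ℚ R (1 / (k.factorial:ℚ)) * (((n+1).descFactorial k : R))) *
                (a * ((a - (k : R) * b) ^ (k - 1) * (-a + (k:R) * b) ^ (n + 1 - k))) := by ring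
          _ = (((n+1).choose k : R)) * (a * ((-1:R)^(n+1-k) * (a - (k:R)*b)^n)) := by
              rw [hfac, hp]
          _ = ((-1:R)^(n+1) * a) * ((-1:R)^k * (((n+1).choose k : R)) * (a - (k:R)*b)^n) := by
              rw [hsign]; ring
      rw [Finset.sum_congr rfl hIcc, ← Finset.mul_sum]
      have hsplit : ∑ k ∈ Finset.range (n+2), hfun k
          = hfun 0 + ∑ k ∈ Finset.Icc 1 (n+1), hfun k := by
        rw [Finset.sum_range_succ', ← Finset.Ico_add_one_right_eq_Icc, Finset.sum_Ico_eq_sum_range]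
        norm_num
        rw [add_comm]
        congr 1
        apply Finset.sum_congr rfl
        intro i _
        rw [add_comm 1 i]
      have hIccsum : ∑ k ∈ Finset.Icc 1 (n+1), hfun k = -hfun 0 := by
        have h0 : ∑ k ∈ Finset.range (n+2), hfun k = 0 := halt
        rw [hsplit] at h0
        linear_combination h0
      rw [hIccsum]
      have h00 : hfun 0 = a ^ n := by
        rw [hhfun]; simp
      rw [h00, neg_pow]
      ring
    have : IsAddTorsionFree R := IsAddTorsionFree.of_module_rat R
    have hC := Polynomial.eq_C_of_derivative_eq_zero key
    rw [hC] at hconst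
    rw [eval_C] at hconst
    rw [hconst, map_zero] at hC
    exact sub_eq_zero.mp hC

/-- Taylor's formula for the Abel sequence applied to `x^n`:
`(x+a)^n = Σ_{k=0}^n A_k(a;b) (n)_k (x+kb)^{n-k} / k!`, the `k = 0` term being `x^n`. -/
theorem abel_taylor_pow {R : Type*} [CommRing R] [Algebra ℚ R]
    (n : ℕ) (hn : 1 ≤ n) (a b x : R) :
    (x + a) ^ n =
      x ^ n + ∑ k ∈ Finset.Icc 1 n,
        a * (a - (k : R) * b) ^ (k - 1) * algebraMap ℚ R (1 / (k.factorial : ℚ)) *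
          (n.descFactorial k : R) * (x + (k : R) * b) ^ (n - k) := by
  have h := abel_poly_s3 a b n hn
  simpa only [Polynomial.eval_pow, Polynomial.eval_add, Polynomial.eval_X, Polynomial.eval_C,
    Polynomial.eval_finset_sum, Polynomial.eval_mul] using congrArg (Polynomial.eval x) h
end

section
/- Expansion theorem for the forward difference operator: every linear operator T on K[x] that commutes with all shifts E^a (a ∈ K, K an infinite field of characteristic 0) can be written uniquely as T = Σ_{k=0}^{∞} c_k Δ^k / k! with c_k = (T (x)_k)(0), where (x)_k is the lower factorial and Δ the forward difference; the sum is locally finite on each polynomial. -/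
/-!
Newton's forward-difference formula `p = ∑ₖ (Δᵏ p)(0) / k! · (x)ₖ` holds because both sides agree
at every natural number (Gregory–Newton). Applied to the shift `p(x + a)` and pushed through `T`,
which commutes with shifts, it gives `(T p)(a) = ∑ₖ (T (x)ₖ)(0) / k! · (Δᵏ p)(a)`. Uniqueness:
`Δʲ (x)ₖ` vanishes at `0` for `j < k` and equals `k!` for `j = k`, so evaluating the expansion of
`T (x)ₖ` at `0` isolates `cₖ`.
-/

open Polynomial Finset Nat fwdDiff

-- `]^` is a token, so `Δ_[1]^[k]` does not parse: the iterates are written `(Δ_[1])^[k]`.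

section CommRing

variable {R : Type*} [CommRing R]

theorem Polynomial.eval_iterate_comp_X_add_one_sub (p : R[X]) (k : ℕ) (x : R) :
    ((fun q : R[X] => q.comp (X + 1) - q)^[k] p).eval x = (Δ_[1])^[k] p.eval x := by
  induction k generalizing x with
  | zero => rfl
  | succ k ih =>
    simp only [Function.iterate_succ_apply', fwdDiff, eval_sub, eval_comp, eval_add, eval_X,
      eval_one, ih]

theorem fwdDiff_iter_eval_descPochhammer_zero {j k : ℕ} (hjk : j ≤ k) :
    (Δ_[1])^[j] (descPochhammer R k).eval 0 = if j = k then (k ! : R) else 0 := by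
  have hvanish : ∀ i < k, (descPochhammer R k).eval (0 + i • 1) = 0 := fun i hi => by
    simpa using descPochhammer_eval_coe_nat_of_lt (R := R) hi
  rw [fwdDiff_iter_eq_sum_shift]
  split_ifs with hj
  · subst hj
    rw [sum_range_succ, sum_eq_zero fun i hi => by rw [hvanish i (mem_range.1 hi), smul_zero]]
    simp [descPochhammer_eval_eq_descFactorial, Nat.descFactorial_self]
  · exact sum_eq_zero fun i hi => by rw [hvanish i (by grind), smul_zero]

end CommRing

section Field

variable {K : Type*} [Field K] [CharZero K]

theorem Polynomial.eq_sum_fwdDiff_iter_mul_descPochhammer (p : K[X]) :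
    p = ∑ k ∈ range (p.natDegree + 1),
      C ((Δ_[1])^[k] p.eval 0 / k !) * descPochhammer K k := by
  refine eq_of_infinite_eval_eq _ _ (Set.infinite_of_injective_forall_mem Nat.cast_injective
    fun m : ℕ => ?_)
  set u : ℕ → K := fun k => m.choose k * (Δ_[1])^[k] p.eval 0
  have hu_choose : ∀ k ≥ m + 1, u k = 0 := fun k hk => by
    simp [u, Nat.choose_eq_zero_of_lt (Nat.lt_of_succ_le hk)]
  have hu_degree : ∀ k ≥ p.natDegree + 1, u k = 0 := fun k hk => by
    simp [u, fwdDiff_iter_eq_zero_of_degree_lt (Nat.lt_of_succ_le hk)]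
  have hterm : ∀ k, (Δ_[1])^[k] p.eval 0 / k ! * (descPochhammer K k).eval (m : K) = u k :=
    fun k => by
      rw [descPochhammer_eval_eq_descFactorial, Nat.descFactorial_eq_factorial_mul_choose]
      have : (k ! : K) ≠ 0 := Nat.cast_ne_zero.2 k.factorial_ne_zero
      simp only [u, Nat.cast_mul]
      field_simp
  calc p.eval (m : K) = ∑ k ∈ range (m + 1), u k := by
        simpa [u] using shift_eq_sum_fwdDiff_iter 1 p.eval m 0
    _ = ∑ k ∈ range (m + 1 + (p.natDegree + 1)), u k :=
        (eventually_constant_sum hu_choose (by omega)).symm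
    _ = ∑ k ∈ range (p.natDegree + 1), u k := eventually_constant_sum hu_degree (by omega)
    _ = _ := by simp [eval_finsetSum, hterm]

theorem LinearMap.apply_eq_sum_fwdDiff_iter (ℓ : K[X] →ₗ[K] K) (p : K[X]) :
    ℓ p = ∑ k ∈ Finset.range (p.natDegree + 1),
      (Δ_[1])^[k] p.eval 0 / k ! * ℓ (descPochhammer K k) := by
  conv_lhs => rw [p.eq_sum_fwdDiff_iter_mul_descPochhammer]
  simp only [← smul_eq_C_mul, map_sum, map_smul, smul_eq_mul]

theorem Polynomial.eval_apply_eq_sum_fwdDiff_iter (T : K[X] →ₗ[K] K[X])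
    (hT : ∀ (a : K) (p : K[X]), T (p.comp (X + C a)) = (T p).comp (X + C a)) (p : K[X]) (a : K) :
    (T p).eval a = ∑ k ∈ range (p.natDegree + 1),
      (T (descPochhammer K k)).eval 0 / k ! * (Δ_[1])^[k] p.eval a := by
  set q := p.comp (X + C a)
  have hq_eval : (T q).eval 0 = (T p).eval a := by simp [q, hT, eval_comp]
  have hq_natDegree : q.natDegree = p.natDegree := by
    rw [natDegree_comp, natDegree_X_add_C, mul_one]
  have hq_fwdDiff (k : ℕ) : (Δ_[1])^[k] q.eval 0 = (Δ_[1])^[k] p.eval a := by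
    simpa [q, eval_comp] using fwdDiff_iter_comp_add 1 p.eval a k 0
  have := (leval 0 ∘ₗ T).apply_eq_sum_fwdDiff_iter q
  rw [hq_natDegree] at this
  simp only [LinearMap.comp_apply, leval_apply, hq_eval, hq_fwdDiff] at this
  simp only [this, div_mul_comm]

end Field

/-- Expansion theorem for the forward difference operator: every linear
operator `T` on `K[x]` commuting with all shifts `E^a` expands uniquely as
`T = Σ_k c_k Δ^k / k!` with `c_k = (T (x)_k)(0)`. -/
theorem expansion_theorem_forward_difference {K : Type*} [Field K] [CharZero K]
    (T : Polynomial K →ₗ[K] Polynomial K)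
    (hT : ∀ (a : K) (p : Polynomial K),
      T (p.comp (X + C a)) = (T p).comp (X + C a)) :
    (∀ p : Polynomial K,
      T p = ∑ k ∈ Finset.range (p.natDegree + 1),
        C (((T (descPochhammer K k)).eval 0) / (k.factorial : K)) *
          (fun q : Polynomial K => q.comp (X + 1) - q)^[k] p) ∧
    (∀ c : ℕ → K,
      (∀ p : Polynomial K,
        T p = ∑ k ∈ Finset.range (p.natDegree + 1),
          C (c k / (k.factorial : K)) *
            (fun q : Polynomial K => q.comp (X + 1) - q)^[k] p) →
      ∀ k, c k = (T (descPochhammer K k)).eval 0) := by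
  refine ⟨fun p => Polynomial.funext fun a => ?_, fun c hc k => ?_⟩
  · rw [eval_apply_eq_sum_fwdDiff_iter T hT, eval_finsetSum]
    simp only [eval_mul, eval_C, eval_iterate_comp_X_add_one_sub]
  · have h := congrArg (eval 0) (hc (descPochhammer K k))
    rw [descPochhammer_natDegree, eval_finsetSum,
      sum_eq_single_of_mem k (self_mem_range_succ k)] at h
    · have : (k ! : K) ≠ 0 := Nat.cast_ne_zero.2 k.factorial_ne_zero
      rw [eval_mul, eval_C, eval_iterate_comp_X_add_one_sub,
        fwdDiff_iter_eval_descPochhammer_zero le_rfl, if_pos rfl, div_mul_cancel₀ _ this] at h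
      exact h.symm
    · intro j hj hjk
      rw [eval_mul, eval_iterate_comp_X_add_one_sub,
        fwdDiff_iter_eval_descPochhammer_zero (by grind), if_neg hjk, mul_zero]
end

section
/- Generating function for binomial-type sequences (fundamental theorem of finite difference calculus), Abel case: Σ_{n=0}^{∞} A_n(x;b) t^n/n! = exp(x·g(t)) as formal power series in t, where A_n(x;b)=x(x−nb)^{n−1} (A_0=1) and g(t) is the compositional inverse of the delta series f(t) = t·e^{bt}, i.e. g satisfies g(t)e^{b·g(t)} = t. -/
/-!
Write `E c` for `exp (c g)`. Since `E c · E d = E (c + d)`, the relation `g · E b = t` gives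
`g = t · E (-b)` and hence `g ^ k = t ^ k · E (-k b)`. Expanding `E c = ∑ c ^ k g ^ k / k!` then
expresses `[t ^ n] E c` through the coefficients `[t ^ j] E (-k b)` with `j < n`, and strong
induction on `n` gives `n! [t ^ n] E c = c (c - n b) ^ (n - 1)`; the induction step is the
binomial identity `∑ C(n, k) k c ^ k y ^ (n - k) = n c (c + y) ^ (n - 1)`. The right-hand side of
the claim is the polynomial whose value at `c` is `[t ^ n] E c`, so the claim follows by comparing
values at every real `c`.
-/

open Polynomial Finset PowerSeries

theorem sum_range_choose_mul_mul_pow_mul_pow {R : Type*} [CommSemiring R] (x y : R) (n : ℕ) :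
    ∑ k ∈ range (n + 1), (n.choose k : R) * k * x ^ k * y ^ (n - k) =
      n * x * (x + y) ^ (n - 1) := by
  cases n with
  | zero => simp
  | succ n =>
    rw [sum_range_succ', Nat.add_sub_cancel, add_pow, mul_sum]
    simp only [Nat.cast_zero, mul_zero, zero_mul, add_zero]
    refine sum_congr rfl fun k _ => ?_
    have hchoose : ((n + 1).choose (k + 1) : R) * (k + 1) = (n + 1) * n.choose k := by
      simpa using congrArg (Nat.cast : ℕ → R) (Nat.add_one_mul_choose_eq n k).symm
    rw [Nat.add_sub_add_right]
    push_cast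
    calc ((n + 1).choose (k + 1) : R) * (k + 1) * x ^ (k + 1) * y ^ (n - k)
        = ((n + 1).choose (k + 1) * (k + 1)) * (x ^ (k + 1) * y ^ (n - k)) := by ring
      _ = (n + 1) * x * (x ^ k * y ^ (n - k) * n.choose k) := by rw [hchoose]; ring

namespace PowerSeries

variable {K : Type*} [Field K] [CharZero K] {g : K⟦X⟧}

noncomputable def expSubst (c : K) (g : K⟦X⟧) : K⟦X⟧ :=
  (rescale c (exp K)).subst g

lemma coeff_expSubst (hg0 : constantCoeff g = 0) (c : K) (n : ℕ) :
    coeff n (expSubst c g) =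
      ∑ k ∈ range (n + 1), c ^ k / (k.factorial : K) * coeff n (g ^ k) := by
  rw [expSubst, coeff_subst' (HasSubst.of_constantCoeff_zero' hg0),
    finsum_eq_sum_of_support_subset _ (s := range (n + 1))]
  · refine sum_congr rfl fun k _ => ?_
    simp [coeff_rescale, coeff_exp, div_eq_mul_inv]
  · intro k hk
    rw [coe_range, Set.mem_Iio, Nat.lt_succ_iff]
    by_contra! hnk
    exact hk (smul_eq_zero_of_right _ (coeff_of_lt_order _
      ((ENat.natCast_lt_natCast.2 hnk).trans_le (le_order_pow_of_constantCoeff_eq_zero k hg0))))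

lemma expSubst_zero (hg0 : constantCoeff g = 0) : expSubst 0 g = 1 := by
  rw [expSubst, rescale_zero, RingHom.comp_apply, constantCoeff_exp, map_one,
    ← coe_substAlgHom (HasSubst.of_constantCoeff_zero' hg0), map_one]

lemma expSubst_mul (hg0 : constantCoeff g = 0) (c d : K) :
    expSubst c g * expSubst d g = expSubst (c + d) g := by
  rw [expSubst, expSubst, expSubst, ← subst_mul (HasSubst.of_constantCoeff_zero' hg0),
    exp_mul_exp_eq_exp_add]

lemma expSubst_pow (hg0 : constantCoeff g = 0) (c : K) (k : ℕ) :
    expSubst c g ^ k = expSubst (k * c) g := by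
  rw [expSubst, expSubst, ← subst_pow (HasSubst.of_constantCoeff_zero' hg0), ← map_pow,
    exp_pow_eq_rescale_exp, rescale_rescale]

lemma pow_eq_X_pow_mul_expSubst {b : K} (hg0 : constantCoeff g = 0)
    (hg : g * expSubst b g = X) (k : ℕ) : g ^ k = X ^ k * expSubst (k * -b) g := by
  have hg_eq : g = X * expSubst (-b) g := by
    rw [← hg, mul_assoc, expSubst_mul hg0, add_neg_cancel, expSubst_zero hg0, mul_one]
  rw [← expSubst_pow hg0, ← mul_pow, ← hg_eq]

lemma natCast_mul_factorial_mul_coeff_pow {b : K} (hg0 : constantCoeff g = 0)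
    (hg : g * expSubst b g = X) {n : ℕ}
    (habel : ∀ m < n, m ≠ 0 → ∀ c : K,
      (m.factorial : K) * coeff m (expSubst c g) = c * (c - m * b) ^ (m - 1))
    {k : ℕ} (hk : k ≤ n) :
    (n : K) * (n - k).factorial * coeff n (g ^ k) = k * (-(n * b)) ^ (n - k) := by
  rcases eq_or_ne k 0 with rfl | hk0
  · rcases eq_or_ne n 0 with rfl | hn0 <;> simp [coeff_one, *]
  rw [pow_eq_X_pow_mul_expSubst hg0 hg, coeff_X_pow_mul', if_pos hk]
  obtain ⟨j, rfl⟩ := Nat.exists_eq_add_of_le hk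
  rw [Nat.add_sub_cancel_left]
  rcases eq_or_ne j 0 with rfl | hj0
  · simp [coeff_expSubst hg0]
  rw [mul_assoc, habel j (by omega) hj0]
  obtain ⟨i, rfl⟩ : ∃ i, j = i + 1 := ⟨j - 1, by omega⟩
  push_cast
  ring

lemma factorial_mul_coeff_expSubst_of_coeff_pow {b : K} (hg0 : constantCoeff g = 0) {n : ℕ}
    (hn : n ≠ 0)
    (hpow : ∀ k ≤ n, (n : K) * (n - k).factorial * coeff n (g ^ k) = k * (-(n * b)) ^ (n - k))
    (c : K) : (n.factorial : K) * coeff n (expSubst c g) = c * (c - n * b) ^ (n - 1) := by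
  refine mul_left_cancel₀ (Nat.cast_ne_zero.2 hn : (n : K) ≠ 0) ?_
  calc (n : K) * (n.factorial * coeff n (expSubst c g))
      = ∑ k ∈ range (n + 1), (n.choose k : K) * c ^ k *
          ((n : K) * (n - k).factorial * coeff n (g ^ k)) := by
        rw [coeff_expSubst hg0, mul_sum, mul_sum]
        refine sum_congr rfl fun k hk => ?_
        rw [← Nat.choose_mul_factorial_mul_factorial (Nat.lt_succ_iff.1 (mem_range.1 hk))]
        have : (k.factorial : K) ≠ 0 := Nat.cast_ne_zero.2 k.factorial_ne_zero
        push_cast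
        field_simp
    _ = ∑ k ∈ range (n + 1), (n.choose k : K) * k * c ^ k * (-(n * b)) ^ (n - k) :=
        sum_congr rfl fun k hk => by rw [hpow k (Nat.lt_succ_iff.1 (mem_range.1 hk))]; ring
    _ = n * (c * (c - n * b) ^ (n - 1)) := by
        rw [sum_range_choose_mul_mul_pow_mul_pow, ← sub_eq_add_neg, mul_assoc]

theorem factorial_mul_coeff_expSubst {b : K} (hg0 : constantCoeff g = 0)
    (hg : g * expSubst b g = X) {n : ℕ} (hn : n ≠ 0) (c : K) :
    (n.factorial : K) * coeff n (expSubst c g) = c * (c - n * b) ^ (n - 1) := by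
  induction n using Nat.strong_induction_on generalizing c with
  | _ n ih =>
    exact factorial_mul_coeff_expSubst_of_coeff_pow hg0 hn
      (fun _ hk => natCast_mul_factorial_mul_coeff_pow hg0 hg ih hk) c

end PowerSeries

/-- Generating function for the Abel polynomials:
`Σ_n A_n(x;b) t^n/n! = exp(x g(t))` where `g` is the compositional inverse of
`f(t) = t e^{bt}`, i.e. `g(t) e^{b g(t)} = t`.  Since `g` has zero constant
term, `e^{b g(t)}` is the power series whose `n`-th coefficient is
`Σ_{k≤n} b^k/k! · [t^n] g^k`, and the identity is stated coefficientwise: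
the coefficient of `t^n` in `exp(x g(t))` is `Σ_{m≤n} ([t^n] g^m / m!) x^m`. -/
theorem abel_generating_function (b : ℝ) (A : ℕ → Polynomial ℝ)
    (hA0 : A 0 = 1)
    (hA : ∀ n : ℕ, 1 ≤ n → A n = Polynomial.X * (Polynomial.X - Polynomial.C ((n : ℝ) * b)) ^ (n - 1))
    (g : PowerSeries ℝ)
    (hg0 : PowerSeries.constantCoeff g = 0)
    (hg : g * PowerSeries.mk (fun n =>
        ∑ k ∈ Finset.range (n + 1),
          b ^ k / (k.factorial : ℝ) * PowerSeries.coeff n (g ^ k)) =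
      PowerSeries.X) :
    ∀ n : ℕ,
      ((n.factorial : ℝ)⁻¹) • A n =
        ∑ m ∈ Finset.range (n + 1),
          (PowerSeries.coeff n (g ^ m) / (m.factorial : ℝ)) •
            (Polynomial.X ^ m : Polynomial ℝ) := by
  have hE : g * expSubst b g = PowerSeries.X := by
    rw [← hg]
    congr 1
    ext n
    rw [coeff_expSubst hg0, coeff_mk]
  intro n
  refine Polynomial.funext fun c => ?_
  have heval : eval c (∑ m ∈ range (n + 1),
      (PowerSeries.coeff n (g ^ m) / (m.factorial : ℝ)) • (Polynomial.X ^ m : ℝ[X])) =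
        PowerSeries.coeff n (expSubst c g) := by
    simp only [eval_finsetSum, eval_smul, eval_pow, eval_X, smul_eq_mul, coeff_expSubst hg0]
    exact sum_congr rfl fun m _ => by ring
  rw [heval, eval_smul, smul_eq_mul, inv_mul_eq_div,
    div_eq_iff (Nat.cast_ne_zero.2 n.factorial_ne_zero), mul_comm]
  rcases eq_or_ne n 0 with rfl | hn
  · simp [hA0, coeff_expSubst hg0]
  · rw [factorial_mul_coeff_expSubst hg0 hE hn, hA n (Nat.one_le_iff_ne_zero.2 hn)]
    simp
end
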